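/- The standard right orthonormal Laurent polynomials χ_n and their substar conjugates χ_{n*} satisfy, as identities in ℂ[z, z^{−1}]: (i) for every n ≥ 1, ρ_{2n}·χ_{2n} = conj(a_{2n})·χ_{2n−1} + χ_{2n−1,*} and ρ_{2n}·χ_{2n,*} = χ_{2n−1} + a_{2n}·χ_{2n−1,*}; (ii) for every n ≥ 1, χ_{2n−1} = −a_{2n}·χ_{2n−1,*} + ρ_{2n}·χ_{2n,*} and χ_{2n} = ρ̂_{2n}·χ_{2n−1,*} + conj(a_{2n})·χ_{2n,*}; (iii) for every n ≥ 0, z·χ_{2n,*} = −a_{2n+1}·χ_{2n} + ρ_{2n+1}·χ_{2n+1} and z·χ_{2n+1,*} = ρ̂_{2n+1}·χ_{2n} + conj(a_{2n+1})·χ_{2n+1}. -/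

import Mathlib

open LaurentPolynomial Polynomial Complex ComplexConjugate

noncomputable section

/-- Reversed polynomial with conjugated coefficients: p*(z) = Σ conj(c_{m-k}) z^k. -/
def revc (p : Polynomial ℂ) : Polynomial ℂ := (p.map (starRingEnd ℂ)).reverse

/-- Monic orthogonal polynomials from Schur parameters: φ_0 = 1,
φ_n = z φ_{n-1} + a_n φ*_{n-1}. -/
def phi (a : ℕ → ℂ) : ℕ → Polynomial ℂ
  | 0 => 1
  | n + 1 => X * phi a n + Polynomial.C (a (n + 1)) * revc (phi a n)

/-- ρ_n := |1 - |a_n|²|^{1/2}. -/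
def rho (a : ℕ → ℂ) (n : ℕ) : ℝ := Real.sqrt |1 - ‖a n‖ ^ 2|

/-- ε_n := sgn (1 - |a_n|²). -/
def sgn (a : ℕ → ℂ) (n : ℕ) : ℝ := Real.sign (1 - ‖a n‖ ^ 2)

/-- ρ̂_n := ε_n ρ_n. -/
def rhoh (a : ℕ → ℂ) (n : ℕ) : ℝ := sgn a n * rho a n

/-- κ_n := Π_{k=1}^n ρ_k⁻¹ (κ_0 = 1). -/
def kap (a : ℕ → ℂ) (n : ℕ) : ℝ := ∏ k ∈ Finset.Icc 1 n, (rho a k)⁻¹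

/-- e_n := Π_{k=1}^n ε_k (e_0 = 1). -/
def esgn (a : ℕ → ℂ) (n : ℕ) : ℝ := ∏ k ∈ Finset.Icc 1 n, sgn a k

/-- Orthonormal polynomials φ̂_n := κ_n φ_n. -/
def phin (a : ℕ → ℂ) (n : ℕ) : Polynomial ℂ := Polynomial.C ((kap a n : ℝ) : ℂ) * phi a n

/-- Standard right orthonormal Laurent polynomials:
χ_{2m} = z^{-m} φ̂*_{2m}, χ_{2m+1} = z^{-m} φ̂_{2m+1}. -/
def chi (a : ℕ → ℂ) (n : ℕ) : LaurentPolynomial ℂ :=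
  T (-((n / 2 : ℕ) : ℤ)) * (if Even n then revc (phin a n) else phin a n).toLaurent

/-- The kernel K_n(z,y) := Σ_{k=0}^n e_k φ̂_k(z) conj(φ̂_k(y)). -/
def Kker (a : ℕ → ℂ) (n : ℕ) (z y : ℂ) : ℂ :=
  ∑ k ∈ Finset.range (n + 1),
    ((esgn a k : ℝ) : ℂ) * (phin a k).eval z * conj ((phin a k).eval y)

/-- Entries of the five-diagonal matrix, with rows/columns indexed from 1. -/
def Fent (a : ℕ → ℂ) (i j : ℕ) : ℂ :=
  if i = 1 then
    if j = 1 then -a 1 else if j = 2 then (rho a 1 : ℂ) else 0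
  else if i % 2 = 0 then
    if j + 1 = i then -(rhoh a (i - 1) : ℂ) * a i
    else if j = i then -conj (a (i - 1)) * a i
    else if j = i + 1 then -(rho a i : ℂ) * a (i + 1)
    else if j = i + 2 then (rho a i : ℂ) * (rho a (i + 1) : ℂ)
    else 0
  else
    if j + 2 = i then (rhoh a (i - 2) : ℂ) * (rhoh a (i - 1) : ℂ)
    else if j + 1 = i then conj (a (i - 2)) * (rhoh a (i - 1) : ℂ)
    else if j = i then -conj (a (i - 1)) * a i
    else if j = i + 1 then conj (a (i - 1)) * (rho a i : ℂ)
    else 0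

/-- The n×n five-diagonal matrix ℱ_n. -/
def Fmat (a : ℕ → ℂ) (n : ℕ) : Matrix (Fin n) (Fin n) ℂ :=
  Matrix.of fun i j => Fent a (i.val + 1) (j.val + 1)

/-- Evaluation of a Laurent polynomial at a nonzero complex number. -/
def levalAt (z : ℂ) (f : LaurentPolynomial ℂ) : ℂ :=
  Finsupp.sum (AddMonoidAlgebra.coeff f) fun k c => c * z ^ k

/-- Substar conjugate of a Laurent polynomial: f_*(z) = Σ conj(c_k) z^{-k}. -/
def substar (f : LaurentPolynomial ℂ) : LaurentPolynomial ℂ :=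
  AddMonoidAlgebra.ofCoeff
    (Finsupp.mapRange (starRingEnd ℂ) (map_zero _) (AddMonoidAlgebra.coeff (LaurentPolynomial.invert f)))

/-!
In `ℂ[z, z⁻¹]` the substar conjugation is a conjugate-linear involution with
`(zⁿ f)_* = z⁻ⁿ f_*`, and `φ*_n = zⁿ φ_{n*}` because `φ_n` is monic of degree `n`. Hence
`χ_{2m} = z^m φ̂_{2m*}`, `χ_{2m+1} = z^{-m} φ̂_{2m+1}`, `χ_{2m*} = z^{-m} φ̂_{2m}` and
`χ_{2m+1,*} = z^m φ̂_{2m+1,*}`, while the Szegő recursion, normalized by `ρ_{n+1} κ_{n+1} = κ_n`,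
reads `ρ_{n+1} φ̂_{n+1} = z φ̂_n + a_{n+1} zⁿ φ̂_{n*}`. Substituting gives the first identity of (i)
(from the substar of the recursion at `2n - 1`) and of (iii) (from the recursion at `2n`).
Everything else is elimination: the second identity of (i) is the substar of the first, and (ii)
and the second identity of (iii) follow by solving the resulting linear systems, using
`ρ̂_n ρ_n = 1 - |a_n|²` and `ρ_n ≠ 0`.
-/

lemma Real.sign_mul_abs (r : ℝ) : Real.sign r * |r| = r := by
  rcases lt_trichotomy r 0 with h | rfl | h
  · rw [Real.sign_of_neg h, abs_of_neg h, neg_one_mul, neg_neg]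
  · simp
  · rw [Real.sign_of_pos h, abs_of_pos h, one_mul]

lemma LaurentPolynomial.coeff_T_mul {R : Type*} [Semiring R] (n k : ℤ) (f : R[T;T⁻¹]) :
    (T n * f).coeff k = f.coeff (k - n) := by
  rw [show (T n : R[T;T⁻¹]) = AddMonoidAlgebra.single n 1 from rfl,
    AddMonoidAlgebra.coeff_single_mul_apply, one_mul, neg_add_eq_sub]

lemma Polynomial.coeff_toLaurent_eq_ite {R : Type*} [Semiring R] (p : R[X]) (k : ℤ) :
    p.toLaurent.coeff k = if 0 ≤ k then p.coeff k.toNat else 0 := by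
  rw [Polynomial.toLaurent_apply, AddMonoidAlgebra.mapDomain, AddMonoidAlgebra.coeff_ofCoeff]
  rcases le_or_gt 0 k with h | h
  · obtain ⟨m, rfl⟩ := Int.eq_ofNat_of_zero_le h
    rw [if_pos h, Finsupp.mapDomain_apply Nat.cast_injective]
    simp [Polynomial.toFinsupp_apply]
  · rw [Finsupp.mapDomain_of_notMem_range, if_neg h.not_ge]
    rintro ⟨m, rfl⟩
    omega

lemma Polynomial.toLaurent_C_mul (c : ℂ) (p : ℂ[X]) :
    (Polynomial.C c * p).toLaurent = c • p.toLaurent := by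
  rw [toLaurent_C_mul_eq, ← LaurentPolynomial.smul_eq_C_mul]

lemma coeff_substar (f : LaurentPolynomial ℂ) (k : ℤ) :
    (substar f).coeff k = conj (f.coeff (-k)) := by
  rw [substar, AddMonoidAlgebra.coeff_ofCoeff, Finsupp.mapRange_apply, invert_apply]

lemma substar_add (f g : LaurentPolynomial ℂ) : substar (f + g) = substar f + substar g := by
  ext k
  simp only [coeff_substar, AddMonoidAlgebra.coeff_add, Finsupp.add_apply, map_add]

lemma substar_smul (c : ℂ) (f : LaurentPolynomial ℂ) : substar (c • f) = conj c • substar f := by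
  ext k
  simp only [coeff_substar, AddMonoidAlgebra.coeff_smul_apply, smul_eq_mul, map_mul]

lemma substar_T_mul (n : ℤ) (f : LaurentPolynomial ℂ) :
    substar (T n * f) = T (-n) * substar f := by
  ext k
  rw [coeff_T_mul, coeff_substar, coeff_substar, coeff_T_mul, sub_neg_eq_add, neg_add']

lemma substar_substar (f : LaurentPolynomial ℂ) : substar (substar f) = f := by
  ext k
  rw [coeff_substar, coeff_substar, neg_neg, conj_conj]

lemma toLaurent_revc (p : ℂ[X]) : (revc p).toLaurent = T p.natDegree * substar p.toLaurent := by
  ext k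
  rw [coeff_T_mul, coeff_substar, neg_sub, coeff_toLaurent_eq_ite, coeff_toLaurent_eq_ite]
  by_cases hk : 0 ≤ k
  · have hrevc : (revc p).coeff k.toNat = conj (p.coeff (revAt p.natDegree k.toNat)) := by
      rw [revc, coeff_reverse, natDegree_map, coeff_map]
    rw [if_pos hk, hrevc]
    by_cases hkN : k ≤ p.natDegree
    · rw [if_pos (by omega), revAt_le (by omega)]
      congr 3
      omega
    · rw [if_neg (by omega), revAt_eq_self_of_lt (by omega),
        coeff_eq_zero_of_natDegree_lt (by omega), map_zero]
  · rw [if_neg hk, if_pos (by omega), coeff_eq_zero_of_natDegree_lt (by omega), map_zero]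

lemma revc_C_mul (c : ℂ) (p : ℂ[X]) :
    revc (Polynomial.C c * p) = Polynomial.C (conj c) * revc p := by
  rcases eq_or_ne c 0 with rfl | hc
  · simp [revc]
  · rw [revc, revc, Polynomial.map_mul, map_C, reverse, reverse,
      natDegree_C_mul (by simpa using hc), reflect_C_mul]

section Szego

variable (a : ℕ → ℂ)

lemma degree_phi (n : ℕ) : (phi a n).degree = n := by
  induction n with
  | zero => simp [phi]
  | succ n ih =>
    have hX : (X * phi a n).degree = ↑(n + 1) := by rw [mul_comm, degree_mul_X, ih]; rfl
    have hlt : (Polynomial.C (a (n + 1)) * revc (phi a n)).degree < ↑(n + 1) :=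
      calc _ ≤ ((Polynomial.C (a (n + 1)) * revc (phi a n)).natDegree : WithBot ℕ) :=
            degree_le_natDegree
        _ ≤ n := by
            have := (natDegree_C_mul_le (a (n + 1)) _).trans <| (reverse_natDegree_le _).trans <|
              (natDegree_map_le (f := starRingEnd ℂ)).trans (natDegree_eq_of_degree_eq_some ih).le
            exact_mod_cast this
        _ < ↑(n + 1) := by exact_mod_cast n.lt_succ_self
    rw [phi, degree_add_eq_left_of_degree_lt (hX ▸ hlt), hX]

lemma natDegree_phi (n : ℕ) : (phi a n).natDegree = n :=
  natDegree_eq_of_degree_eq_some (degree_phi a n)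

lemma toLaurent_phi_succ (n : ℕ) :
    (phi a (n + 1)).toLaurent =
      T 1 * (phi a n).toLaurent + a (n + 1) • (T n * substar (phi a n).toLaurent) := by
  rw [phi, map_add, map_mul, toLaurent_X, toLaurent_C_mul, toLaurent_revc, natDegree_phi]

lemma toLaurent_revc_phin (n : ℕ) :
    (revc (phin a n)).toLaurent = T n * substar (phin a n).toLaurent := by
  rw [phin, revc_C_mul, conj_ofReal, toLaurent_C_mul, toLaurent_C_mul, toLaurent_revc,
    natDegree_phi, substar_smul, conj_ofReal, mul_smul_comm]

end Szego

section Normalization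

variable {a : ℕ → ℂ} {n : ℕ}

lemma rho_ne_zero (h : ‖a n‖ ≠ 1) : rho a n ≠ 0 := by
  rw [rho, Ne, Real.sqrt_eq_zero', abs_nonpos_iff, sub_eq_zero, eq_comm,
    pow_eq_one_iff_of_nonneg (norm_nonneg _) two_ne_zero]
  exact h

lemma rho_mul_kap_succ (h : rho a (n + 1) ≠ 0) : rho a (n + 1) * kap a (n + 1) = kap a n := by
  rw [kap, kap, Finset.prod_Icc_succ_top (by omega), mul_comm, mul_assoc, inv_mul_cancel₀ h,
    mul_one]

lemma rhoh_mul_rho : rhoh a n * rho a n = 1 - ‖a n‖ ^ 2 := by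
  rw [rhoh, sgn, rho, mul_assoc, Real.mul_self_sqrt (abs_nonneg _), Real.sign_mul_abs]

lemma ofReal_rhoh_mul_rho : (rhoh a n : ℂ) * rho a n = 1 - conj (a n) * a n := by
  rw [← normSq_eq_conj_mul_self, normSq_eq_norm_sq]
  exact_mod_cast rhoh_mul_rho

lemma rho_smul_toLaurent_phin_succ (h : ‖a (n + 1)‖ ≠ 1) :
    (rho a (n + 1) : ℂ) • (phin a (n + 1)).toLaurent =
      T 1 * (phin a n).toLaurent + a (n + 1) • (T n * substar (phin a n).toLaurent) := by
  have hκ : (rho a (n + 1) : ℂ) * kap a (n + 1) = kap a n := by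
    exact_mod_cast rho_mul_kap_succ (rho_ne_zero h)
  rw [phin, phin, toLaurent_C_mul, toLaurent_C_mul, smul_smul, hκ, toLaurent_phi_succ,
    substar_smul, conj_ofReal]
  simp only [smul_add, mul_smul_comm, smul_comm (kap a n : ℂ)]

lemma rho_smul_substar_toLaurent_phin_succ (h : ‖a (n + 1)‖ ≠ 1) :
    (rho a (n + 1) : ℂ) • substar (phin a (n + 1)).toLaurent =
      T (-1) * substar (phin a n).toLaurent +
        conj (a (n + 1)) • (T (-n) * (phin a n).toLaurent) := by
  simpa only [substar_add, substar_smul, substar_T_mul, substar_substar, conj_ofReal]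
    using congrArg substar (rho_smul_toLaurent_phin_succ h)

end Normalization

section Chi

variable (a : ℕ → ℂ) (m : ℕ)

lemma chi_two_mul : chi a (2 * m) = T m * substar (phin a (2 * m)).toLaurent := by
  rw [chi, if_pos (even_two_mul m), Nat.mul_div_cancel_left m two_pos, toLaurent_revc_phin,
    ← mul_assoc, ← T_add]
  congr 2
  push_cast
  ring

lemma chi_two_mul_add_one : chi a (2 * m + 1) = T (-m) * (phin a (2 * m + 1)).toLaurent := by
  rw [chi, if_neg (Nat.not_even_iff_odd.2 (odd_two_mul_add_one m))]
  congr 4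
  omega

lemma substar_chi_two_mul : substar (chi a (2 * m)) = T (-m) * (phin a (2 * m)).toLaurent := by
  rw [chi_two_mul, substar_T_mul, substar_substar]

lemma substar_chi_two_mul_add_one :
    substar (chi a (2 * m + 1)) = T m * substar (phin a (2 * m + 1)).toLaurent := by
  rw [chi_two_mul_add_one, substar_T_mul, neg_neg]

end Chi

section Relations

variable (a : ℕ → ℂ)

lemma rho_smul_chi_two_mul {n : ℕ} (hn : 1 ≤ n) (h : ‖a (2 * n)‖ ≠ 1) :
    (rho a (2 * n) : ℂ) • chi a (2 * n) =
      conj (a (2 * n)) • chi a (2 * n - 1) + substar (chi a (2 * n - 1)) := by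
  obtain ⟨m, rfl⟩ := Nat.exists_eq_add_of_le' hn
  have hm : 2 * (m + 1) = 2 * m + 1 + 1 := by ring
  rw [hm] at h
  rw [chi_two_mul, show 2 * (m + 1) - 1 = 2 * m + 1 by omega, substar_chi_two_mul_add_one,
    chi_two_mul_add_one, hm, ← mul_smul_comm, rho_smul_substar_toLaurent_phin_succ h, mul_add,
    mul_smul_comm, ← mul_assoc, ← mul_assoc, ← T_add, ← T_add, add_comm]
  congr 4 <;> push_cast <;> ring

lemma T_one_mul_substar_chi_two_mul (n : ℕ) (h : ‖a (2 * n + 1)‖ ≠ 1) :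
    T 1 * substar (chi a (2 * n)) =
      (-a (2 * n + 1)) • chi a (2 * n) + (rho a (2 * n + 1) : ℂ) • chi a (2 * n + 1) := by
  rw [substar_chi_two_mul, chi_two_mul, chi_two_mul_add_one,
    ← mul_smul_comm (rho a (2 * n + 1) : ℂ), rho_smul_toLaurent_phin_succ h]
  simp only [mul_add, mul_smul_comm, ← mul_assoc, ← T_add]
  rw [show -(n : ℤ) + ↑(2 * n) = n by push_cast; ring, add_comm (-(n : ℤ)) 1]
  module

end Relations

section Elimination

variable {f F : LaurentPolynomial ℂ} {c r' : ℂ} {r : ℝ}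

lemma smul_substar_eq_of_smul_eq (h : (r : ℂ) • F = conj c • f + substar f) :
    (r : ℂ) • substar F = f + c • substar f := by
  simpa only [substar_add, substar_smul, substar_substar, conj_ofReal, conj_conj, add_comm]
    using congrArg substar h

lemma eq_smul_substar_add_of_smul_eq (hr : r ≠ 0) (hrr : r' * r = 1 - conj c * c)
    (h : (r : ℂ) • F = conj c • f + substar f) :
    F = r' • substar f + conj c • substar F := by
  have hb := smul_substar_eq_of_smul_eq h
  apply smul_right_injective _ (ofReal_ne_zero.2 hr)
  linear_combination (norm := module) h - conj c • hb - hrr • substar f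

lemma T_one_mul_substar_eq_of_T_one_mul_substar_eq (hr : r ≠ 0) (hrr : r' * r = 1 - conj c * c)
    (h : T 1 * substar f = (-c) • f + (r : ℂ) • F) :
    T 1 * substar F = r' • f + conj c • F := by
  have hs : f = (-conj c) • (T 1 * substar f) + (r : ℂ) • (T 1 * substar F) := by
    have hT := congrArg (T 1 * substar ·) h
    simp only [substar_T_mul, substar_add, substar_smul, substar_substar, conj_ofReal, map_neg,
      ← mul_assoc, ← T_add, add_neg_cancel, T_zero, one_mul, mul_add, mul_smul_comm] at hT
    exact hT
  apply smul_right_injective _ (ofReal_ne_zero.2 hr)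
  linear_combination (norm := module) -hs + conj c • h - hrr • f

end Elimination

/-- Proposition 2.3: relations between the standard right orthonormal
Laurent polynomials χ_n and their substar conjugates χ_{n*}. -/
theorem chi_substar_relations (a : ℕ → ℂ) (ha : ∀ n, 1 ≤ n → ‖a n‖ ≠ 1) :
    (∀ n : ℕ, 1 ≤ n →
      (rho a (2 * n) : ℂ) • chi a (2 * n) =
          conj (a (2 * n)) • chi a (2 * n - 1) + substar (chi a (2 * n - 1)) ∧
      (rho a (2 * n) : ℂ) • substar (chi a (2 * n)) =
          chi a (2 * n - 1) + a (2 * n) • substar (chi a (2 * n - 1))) ∧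
    (∀ n : ℕ, 1 ≤ n →
      chi a (2 * n - 1) =
          (-a (2 * n)) • substar (chi a (2 * n - 1)) +
            (rho a (2 * n) : ℂ) • substar (chi a (2 * n)) ∧
      chi a (2 * n) =
          (rhoh a (2 * n) : ℂ) • substar (chi a (2 * n - 1)) +
            conj (a (2 * n)) • substar (chi a (2 * n))) ∧
    (∀ n : ℕ,
      T 1 * substar (chi a (2 * n)) =
          (-a (2 * n + 1)) • chi a (2 * n) + (rho a (2 * n + 1) : ℂ) • chi a (2 * n + 1) ∧
      T 1 * substar (chi a (2 * n + 1)) =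
          (rhoh a (2 * n + 1) : ℂ) • chi a (2 * n) +
            conj (a (2 * n + 1)) • chi a (2 * n + 1)) := by
  have hρ : ∀ n, 1 ≤ n → rho a n ≠ 0 := fun n hn => rho_ne_zero (ha n hn)
  have hi : ∀ n, 1 ≤ n → (rho a (2 * n) : ℂ) • chi a (2 * n) =
      conj (a (2 * n)) • chi a (2 * n - 1) + substar (chi a (2 * n - 1)) :=
    fun n hn => rho_smul_chi_two_mul a hn (ha _ (by omega))
  refine ⟨fun n hn => ⟨hi n hn, smul_substar_eq_of_smul_eq (hi n hn)⟩,
    fun n hn => ⟨?_,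
      eq_smul_substar_add_of_smul_eq (hρ _ (by omega)) ofReal_rhoh_mul_rho (hi n hn)⟩,
    fun n => ?_⟩
  · rw [smul_substar_eq_of_smul_eq (hi n hn)]
    module
  · have hiii := T_one_mul_substar_chi_two_mul a n (ha _ (by omega))
    exact ⟨hiii,
      T_one_mul_substar_eq_of_T_one_mul_substar_eq (hρ _ (by omega)) ofReal_rhoh_mul_rho hiii⟩
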